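/- arXiv:2108.03417 — 3 statements merged into one kernel-verified Lean document; each statement's English description precedes it below -/
import Mathlib

section
/- Let α, β, λ > 0. Then for every z ∈ ℂ with Re z > λ^{1/α}, the Laplace transform identity ∫_0^∞ e^{−zt} t^{β−1} E_{α,β}(−λ t^α) dt = z^{α−β}/(z^α + λ) holds, where z^α and z^{α−β} denote principal complex powers. -/
/-! Expanding `E_{α,β}` into its power series turns the integrand into
`∑ₖ (-λ)^k / Γ(αk+β) · t^(αk+β-1) e^(-zt)`. The `k`-th term has Laplace transform
`(-λ)^k z^(-(αk+β))`: this is the Gamma integral, carried from real to complex rates by the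
identity theorem. Since `λ < (Re z)^α`, the integrals of the absolute values form the convergent
geometric series `∑ λ^k (Re z)^(-(αk+β))`, so sum and integral may be interchanged, and
`∑ (-λ z^(-α))^k z^(-β) = z^(α-β) / (z^α + λ)`. -/

open MeasureTheory Set Filter Complex Topology

/-- The Mittag-Leffler function `E_{α,β}(x) = ∑_{k=0}^∞ x^k / Γ(αk + β)` for real `x`. -/
noncomputable def mittagLeffler (α β x : ℝ) : ℝ :=
  ∑' k : ℕ, x ^ k / Real.Gamma (α * k + β)

lemma integrableOn_rpow_mul_exp_neg_mul {s c : ℝ} (hs : 0 < s) (hc : 0 < c) :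
    IntegrableOn (fun t : ℝ => t ^ (s - 1) * Real.exp (-(c * t))) (Ioi 0) := by
  simpa using integrableOn_rpow_mul_exp_neg_mul_rpow (p := 1) (by linarith : -1 < s - 1) one_pos hc

lemma norm_cpow_mul_cexp_neg_mul (s z : ℂ) {t : ℝ} (ht : 0 < t) :
    ‖(t : ℂ) ^ (s - 1) * cexp (-(z * t))‖ = t ^ (s.re - 1) * Real.exp (-(z.re * t)) := by
  simp [norm_cpow_eq_rpow_re_of_pos ht, Complex.norm_exp]

lemma measurable_cpow_mul_cexp_neg_mul (s z : ℂ) :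
    Measurable fun t : ℝ => (t : ℂ) ^ (s - 1) * cexp (-(z * t)) := by
  fun_prop

lemma integrableOn_cpow_mul_cexp_neg_mul {s z : ℂ} (hs : 0 < s.re) (hz : 0 < z.re) :
    IntegrableOn (fun t : ℝ => (t : ℂ) ^ (s - 1) * cexp (-(z * t))) (Ioi 0) :=
  (integrableOn_rpow_mul_exp_neg_mul hs hz).mono'
    (measurable_cpow_mul_cexp_neg_mul s z).aestronglyMeasurable
    ((ae_restrict_iff' measurableSet_Ioi).2 <| .of_forall fun _ ht =>
      (norm_cpow_mul_cexp_neg_mul s z ht).le)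

lemma integral_norm_cpow_mul_cexp_neg_mul {s z : ℂ} (hs : 0 < s.re) (hz : 0 < z.re) :
    ∫ t in Ioi (0 : ℝ), ‖(t : ℂ) ^ (s - 1) * cexp (-(z * t))‖ =
      Real.Gamma s.re * z.re ^ (-s.re) := by
  rw [setIntegral_congr_fun measurableSet_Ioi fun _ ht => norm_cpow_mul_cexp_neg_mul s z ht,
    Real.integral_rpow_mul_exp_neg_mul_Ioi hs hz, one_div, Real.inv_rpow hz.le,
    Real.rpow_neg hz.le, mul_comm]

/-- Differentiate under the integral sign: on `c < Re w` the `w`-derivative of the integrand is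
dominated by `t ^ s.re * exp (-c t)`. -/
lemma differentiableOn_integral_cpow_mul_cexp_neg_mul {s : ℂ} (hs : 0 < s.re) :
    DifferentiableOn ℂ (fun w : ℂ => ∫ t in Ioi (0 : ℝ), (t : ℂ) ^ (s - 1) * cexp (-(w * t)))
      {w | 0 < w.re} := by
  intro z (hz : 0 < z.re)
  set c := z.re / 2
  have hc : 0 < c := by positivity
  have hnhds : {w : ℂ | c < w.re} ∈ 𝓝 z :=
    (isOpen_lt continuous_const continuous_re).mem_nhds (half_lt_self hz)
  refine (hasDerivAt_integral_of_dominated_loc_of_deriv_le hnhds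
    (.of_forall fun w => (measurable_cpow_mul_cexp_neg_mul s w).aestronglyMeasurable)
    (integrableOn_cpow_mul_cexp_neg_mul hs hz)
    (F' := fun w t => (t : ℂ) ^ (s - 1) * cexp (-(w * t)) * -t)
    (by fun_prop : Measurable _).aestronglyMeasurable ?_
    (integrableOn_rpow_mul_exp_neg_mul (s := s.re + 1) (by linarith) hc) ?_).2
    |>.differentiableAt.differentiableWithinAt
  · refine (ae_restrict_iff' measurableSet_Ioi).2 <| .of_forall fun t (ht : 0 < t) w hw => ?_
    have hw : c < w.re := hw
    rw [norm_mul, norm_cpow_mul_cexp_neg_mul s w ht, norm_neg, norm_real, Real.norm_of_nonneg ht.le,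
      add_sub_cancel_right, mul_right_comm, ← Real.rpow_add_one ht.ne', sub_add_cancel]
    gcongr
  · refine (ae_restrict_iff' measurableSet_Ioi).2 <| .of_forall fun t _ w _ => ?_
    exact (((hasDerivAt_id' w).mul_const (t : ℂ)).fun_neg.cexp.const_mul _).congr_deriv (by ring)

lemma frequently_ofReal_pos_nhdsNE_one : ∃ᶠ w : ℂ in 𝓝[≠] 1, ∃ x : ℝ, 0 < x ∧ w = x := by
  have hmap : Tendsto ((↑) : ℝ → ℂ) (𝓝[≠] 1) (𝓝[≠] 1) :=
    tendsto_nhdsWithin_of_tendsto_nhds_of_eventually_within _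
      ((continuous_ofReal.tendsto' 1 1 ofReal_one).mono_left nhdsWithin_le_nhds)
      (eventually_nhdsWithin_of_forall fun x hx => by simpa using hx)
  refine hmap.frequently (Eventually.frequently ?_)
  filter_upwards [nhdsWithin_le_nhds (lt_mem_nhds one_pos)] with x hx using ⟨x, hx, rfl⟩

/-- The real case is `Complex.integral_cpow_mul_exp_neg_mul_Ioi`; both sides are holomorphic on
the right half-plane. -/
theorem integral_cpow_mul_cexp_neg_mul_Ioi {s z : ℂ} (hs : 0 < s.re) (hz : 0 < z.re) :
    ∫ t in Ioi (0 : ℝ), (t : ℂ) ^ (s - 1) * cexp (-(z * t)) = Gamma s * z ^ (-s) := by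
  have hU : IsOpen {w : ℂ | 0 < w.re} := isOpen_lt continuous_const continuous_re
  have hG : DifferentiableOn ℂ (fun w : ℂ => Gamma s * w ^ (-s)) {w | 0 < w.re} :=
    fun w hw => ((differentiableAt_id.cpow_const (Or.inl hw)).const_mul _).differentiableWithinAt
  refine (differentiableOn_integral_cpow_mul_cexp_neg_mul hs).analyticOnNhd hU
    |>.eqOn_of_preconnected_of_frequently_eq (hG.analyticOnNhd hU)
    (convex_halfSpace_re_gt 0).isPreconnected (show (1 : ℂ) ∈ {w : ℂ | 0 < w.re} by simp)
    (frequently_ofReal_pos_nhdsNE_one.mono ?_) hz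
  rintro _ ⟨x, hx, rfl⟩
  rw [integral_cpow_mul_exp_neg_mul_Ioi hs hx, one_div, inv_cpow _ _
    (by rw [arg_ofReal_of_nonneg hx.le]; exact Real.pi_ne_zero.symm), ← cpow_neg, mul_comm]

theorem hasSum_integral_tsum_cpow_mul_cexp_neg_mul {ι : Type*} [Countable ι] {a s : ι → ℂ}
    {z : ℂ} (hs : ∀ i, 0 < (s i).re) (hz : 0 < z.re)
    (hsum : Summable fun i => ‖a i‖ * (Real.Gamma (s i).re * z.re ^ (-(s i).re))) :
    HasSum (fun i => a i * (Gamma (s i) * z ^ (-s i)))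
      (∫ t in Ioi (0 : ℝ), ∑' i, a i * ((t : ℂ) ^ (s i - 1) * cexp (-(z * t)))) := by
  have hint i := (integrableOn_cpow_mul_cexp_neg_mul (hs i) hz).const_mul (a i)
  refine (hasSum_integral_of_summable_integral_norm hint ?_).congr_fun fun i => ?_
  · refine hsum.congr fun i => ?_
    simp_rw [← integral_norm_cpow_mul_cexp_neg_mul (hs i) hz, ← integral_const_mul, ← norm_mul]
  · rw [integral_const_mul, integral_cpow_mul_cexp_neg_mul_Ioi (hs i) hz]

lemma hasSum_neg_mul_cpow_geometric {z c α β : ℂ} (hz : z ≠ 0) (hc : ‖c‖ < ‖z ^ α‖) :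
    HasSum (fun k : ℕ => (-c) ^ k * z ^ (-(α * k + β))) (z ^ (α - β) / (z ^ α + c)) := by
  have hzα : z ^ α ≠ 0 := norm_pos_iff.1 ((norm_nonneg c).trans_lt hc)
  have hratio : ‖-c * z ^ (-α)‖ < 1 := by
    rwa [norm_mul, norm_neg, cpow_neg, norm_inv, ← div_eq_mul_inv, div_lt_one (norm_pos_iff.2 hzα)]
  have hsum : z ^ (α - β) / (z ^ α + c) = (1 - -c * z ^ (-α))⁻¹ * z ^ (-β) := by
    rw [neg_mul, sub_neg_eq_add, sub_eq_add_neg, cpow_add _ _ hz, cpow_neg z α]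
    field_simp
  rw [hsum]
  refine ((hasSum_geometric_of_norm_lt_one hratio).mul_right (z ^ (-β))).congr_fun fun k => ?_
  rw [mul_pow, ← cpow_mul_nat, mul_assoc, ← cpow_add _ _ hz, neg_add, neg_mul]

lemma summable_pow_mul_rpow_neg {c x α β : ℝ} (hc : 0 ≤ c) (hx : 0 < x) (h : c < x ^ α) :
    Summable fun k : ℕ => c ^ k * x ^ (-(α * k + β)) := by
  have hratio : c * x ^ (-α) < 1 := by
    rwa [Real.rpow_neg hx.le, ← div_eq_mul_inv, div_lt_one (by positivity)]
  refine ((summable_geometric_of_lt_one (by positivity) hratio).mul_right (x ^ (-β))).congr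
    fun k => ?_
  rw [mul_pow, ← Real.rpow_mul_natCast hx.le, mul_assoc, ← Real.rpow_add hx, neg_add, neg_mul]

lemma rpow_mul_mittagLeffler_mul_rpow (α β c : ℝ) {t : ℝ} (ht : 0 < t) :
    t ^ (β - 1) * mittagLeffler α β (c * t ^ α) =
      ∑' k : ℕ, c ^ k / Real.Gamma (α * k + β) * t ^ (α * k + β - 1) := by
  rw [mittagLeffler, ← tsum_mul_left]
  refine tsum_congr fun k => ?_
  rw [mul_pow, ← Real.rpow_natCast (t ^ α), ← Real.rpow_mul ht.le,
    show α * k + β - 1 = β - 1 + α * k by ring, Real.rpow_add ht]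
  ring

lemma cexp_mul_rpow_mul_mittagLeffler_mul_rpow (α β c : ℝ) (z : ℂ) {t : ℝ} (ht : 0 < t) :
    cexp (-z * t) * ((t ^ (β - 1) : ℝ) : ℂ) * ((mittagLeffler α β (c * t ^ α) : ℝ) : ℂ) =
      ∑' k : ℕ, ((c ^ k / Real.Gamma (α * k + β) : ℝ) : ℂ) *
        ((t : ℂ) ^ (((α * k + β : ℝ) : ℂ) - 1) * cexp (-(z * t))) := by
  rw [mul_assoc, ← ofReal_mul, rpow_mul_mittagLeffler_mul_rpow α β c ht, ofReal_tsum,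
    ← tsum_mul_left]
  refine tsum_congr fun k => ?_
  rw [ofReal_mul, ofReal_cpow ht.le, neg_mul]
  push_cast
  ring

/-- For `α, β, λ > 0` and `Re z > λ^{1/α}`, the Laplace transform identity
`∫_0^∞ e^{-zt} t^{β-1} E_{α,β}(-λ t^α) dt = z^{α-β}/(z^α + λ)` holds, with principal
complex powers. -/
theorem laplace_mittagLeffler (α β lam : ℝ) (hα : 0 < α) (hβ : 0 < β) (hlam : 0 < lam)
    (z : ℂ) (hz : lam ^ (1 / α) < z.re) :
    ∫ t in Set.Ioi (0 : ℝ),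
        Complex.exp (-z * t) * ((t ^ (β - 1) : ℝ) : ℂ) *
          ((mittagLeffler α β (-lam * t ^ α) : ℝ) : ℂ)
      = z ^ ((α : ℂ) - (β : ℂ)) / (z ^ (α : ℂ) + (lam : ℂ)) := by
  have hre : 0 < z.re := (Real.rpow_pos_of_pos hlam _).trans hz
  have hlam_lt : lam < z.re ^ α := by
    simpa [← Real.rpow_mul hlam.le, hα.ne'] using Real.rpow_lt_rpow (by positivity) hz hα
  have hnorm : ‖(lam : ℂ)‖ < ‖z ^ (α : ℂ)‖ := by
    rw [norm_real, Real.norm_of_nonneg hlam.le, norm_cpow_real]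
    exact hlam_lt.trans_le (Real.rpow_le_rpow hre.le (re_le_norm z) hα.le)
  have hΓ (k : ℕ) : 0 < Real.Gamma (α * k + β) := Real.Gamma_pos_of_pos (by positivity)
  have hseries := hasSum_integral_tsum_cpow_mul_cexp_neg_mul
    (a := fun k : ℕ => (((-lam) ^ k / Real.Gamma (α * k + β) : ℝ) : ℂ))
    (s := fun k : ℕ => ((α * k + β : ℝ) : ℂ)) (fun k => by simpa using by positivity) hre
    ((summable_pow_mul_rpow_neg (β := β) hlam.le hre hlam_lt).congr fun k => by
      rw [norm_real, norm_div, norm_pow, norm_neg, Real.norm_of_nonneg hlam.le,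
        Real.norm_of_nonneg (hΓ k).le, ofReal_re]
      field_simp)
  rw [setIntegral_congr_fun measurableSet_Ioi fun t ht =>
    cexp_mul_rpow_mul_mittagLeffler_mul_rpow α β (-lam) z ht]
  refine hseries.unique <| (hasSum_neg_mul_cpow_geometric (ne_zero_of_re_pos hre) hnorm).congr_fun
    fun k => ?_
  have hΓ' : (Real.Gamma (α * k + β) : ℂ) ≠ 0 := ofReal_ne_zero.2 (hΓ k).ne'
  rw [Gamma_ofReal]
  push_cast
  field_simp
end

section
/- Let α, λ > 0. Then for every t > 0 the function t ↦ E_α(−λ t^α) is differentiable at t with d/dt E_α(−λ t^α) = −λ t^{α−1} E_{α,α}(−λ t^α). -/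
open Filter Real

namespace Real

theorem mul_Gamma_le_rpow_mul_Gamma_add {c y : ℝ} (hc₀ : 0 < c) (hc₁ : c < 1) (hy : 0 < y) :
    y * Gamma y ≤ (y + c) ^ (1 - c) * Gamma (y + c) := by
  have hyc : 0 < y + c := by linarith
  have hΓ : 0 < Gamma (y + c) := Gamma_pos_of_pos hyc
  calc y * Gamma y = Gamma (c * (y + c) + (1 - c) * (y + c + 1)) := by
        rw [← Gamma_add_one hy.ne']; ring_nf
    _ ≤ Gamma (y + c) ^ c * Gamma (y + c + 1) ^ (1 - c) :=
        Gamma_mul_add_mul_le_rpow_Gamma_mul_rpow_Gamma hyc (by linarith) hc₀ (by linarith)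
          (by ring)
    _ = (y + c) ^ (1 - c) * Gamma (y + c) := by
        rw [Gamma_add_one hyc.ne', mul_rpow hyc.le hΓ.le, mul_left_comm, ← rpow_add hΓ,
          add_sub_cancel, rpow_one]

theorem tendsto_Gamma_add_div_Gamma_atTop {c : ℝ} (hc : 0 < c) :
    Tendsto (fun y => Gamma (y + c) / Gamma y) atTop atTop := by
  -- Log-convexity handles shifts `c < 1`; monotonicity of `Γ` on `[2, ∞)` reduces to `c' < 1`.
  set c' := min c (1 / 2)
  have hc'₀ : 0 < c' := lt_min hc one_half_pos
  have hc'₁ : c' ≤ 1 / 2 := min_le_right _ _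
  have hlim : Tendsto (fun y => (y + c') ^ c' / 2) atTop atTop :=
    ((tendsto_rpow_atTop hc'₀).comp (tendsto_atTop_add_const_right _ _ tendsto_id)).atTop_div_const
      two_pos
  refine tendsto_atTop_mono' _ ?_ hlim
  filter_upwards [eventually_ge_atTop 2] with y hy
  have hyc : 0 < y + c' := by linarith
  have hΓy : 0 < Gamma y := Gamma_pos_of_pos (by linarith)
  have hmono : Gamma (y + c') ≤ Gamma (y + c) :=
    Gamma_strictMonoOn_Ici.monotoneOn (by simp only [Set.mem_Ici]; linarith)
      (by simp only [Set.mem_Ici]; linarith) (by simp [c'])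
  have hgautschi := mul_Gamma_le_rpow_mul_Gamma_add hc'₀ (by linarith) (by linarith : 0 < y)
  rw [le_div_iff₀ hΓy]
  have hhalf : 1 / 2 ≤ y / (y + c') := by rw [le_div_iff₀ hyc]; linarith
  calc (y + c') ^ c' / 2 * Gamma y = (y + c') ^ c' * Gamma y * (1 / 2) := by ring
    _ ≤ (y + c') ^ c' * Gamma y * (y / (y + c')) := by gcongr
    _ = (y + c') ^ c' / (y + c') * (y * Gamma y) := by ring
    _ ≤ (y + c') ^ c' / (y + c') * ((y + c') ^ (1 - c') * Gamma (y + c')) := by gcongr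
    _ = Gamma (y + c') := by
        rw [← mul_assoc, div_mul_eq_mul_div, ← rpow_add hyc, add_sub_cancel, rpow_one,
          div_self hyc.ne', one_mul]
    _ ≤ Gamma (y + c) := hmono

end Real

theorem summable_pow_div_Gamma {α : ℝ} (hα : 0 < α) (β x : ℝ) :
    Summable fun k : ℕ => x ^ k / Gamma (α * k + β) := by
  have hlin : Tendsto (fun k : ℕ => α * k + β) atTop atTop :=
    tendsto_atTop_add_const_right _ β (tendsto_natCast_atTop_atTop.const_mul_atTop hα)
  refine summable_of_ratio_norm_eventually_le (r := 1 / 2) (by norm_num) ?_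
  filter_upwards [hlin.eventually_gt_atTop 0,
    ((tendsto_Gamma_add_div_Gamma_atTop hα).comp hlin).eventually_ge_atTop (2 * |x|)]
    with k hpos hratio
  set y := α * (k : ℝ) + β
  have hΓy : 0 < Gamma y := Gamma_pos_of_pos hpos
  have hΓyα : 0 < Gamma (y + α) := Gamma_pos_of_pos (by linarith)
  have hshift : α * ((k + 1 : ℕ) : ℝ) + β = y + α := by push_cast; ring
  rw [Function.comp_apply, le_div_iff₀ hΓy] at hratio
  rw [hshift, norm_div, norm_div, norm_pow, norm_pow, norm_of_nonneg hΓy.le,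
    norm_of_nonneg hΓyα.le, Real.norm_eq_abs, div_le_iff₀ hΓyα, pow_succ]
  calc |x| ^ k * |x| = |x| ^ k / Gamma y * (|x| * Gamma y) := by field_simp
    _ ≤ |x| ^ k / Gamma y * (Gamma (y + α) / 2) := by gcongr; linarith
    _ = 1 / 2 * (|x| ^ k / Gamma y) * Gamma (y + α) := by ring

theorem succ_mul_pow_div_Gamma {α : ℝ} (hα : 0 < α) (j : ℕ) (x : ℝ) :
    ((j + 1 : ℕ) : ℝ) * x ^ j / Gamma (α * (j + 1 : ℕ) + 1) = x ^ j / Gamma (α * j + α) / α := by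
  have hpos : 0 < α * j + α := by positivity
  rw [show α * ((j + 1 : ℕ) : ℝ) + 1 = α * j + α + 1 by push_cast; ring,
    Gamma_add_one hpos.ne', show α * (j : ℝ) + α = α * (j + 1 : ℕ) by push_cast; ring]
  have : Gamma (α * (j + 1 : ℕ)) ≠ 0 := (Gamma_pos_of_pos (by positivity)).ne'
  field_simp

theorem hasDerivAt_mittagLeffler {α : ℝ} (hα : 0 < α) (x : ℝ) :
    HasDerivAt (mittagLeffler α 1) (mittagLeffler α α x / α) x := by
  set R := |x| + 1
  have hΓ (k : ℕ) : 0 < Gamma (α * k + 1) := Gamma_pos_of_pos (by positivity)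
  have hterm (k : ℕ) (y : ℝ) : HasDerivAt (fun z => z ^ k / Gamma (α * k + 1))
      (k * y ^ (k - 1) / Gamma (α * k + 1)) y := (hasDerivAt_pow k y).div_const _
  have hbound (k : ℕ) (y : ℝ) (hy : y ∈ Set.Ioo (-R) R) :
      ‖k * y ^ (k - 1) / Gamma (α * k + 1)‖ ≤ k * R ^ (k - 1) / Gamma (α * k + 1) := by
    rw [norm_div, norm_mul, norm_pow, Real.norm_natCast, norm_of_nonneg (hΓ k).le]
    gcongr
    exact (abs_lt.2 hy).le
  have hsummable : Summable fun k : ℕ => k * R ^ (k - 1) / Gamma (α * k + 1) := by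
    refine (summable_nat_add_iff 1).1 ?_
    simp only [Nat.add_sub_cancel, succ_mul_pow_div_Gamma hα]
    exact (summable_pow_div_Gamma hα α R).div_const α
  have hx : x ∈ Set.Ioo (-R) R := abs_lt.1 (lt_add_one _)
  have hvalue : ∑' k : ℕ, k * x ^ (k - 1) / Gamma (α * k + 1) = mittagLeffler α α x / α := by
    rw [Summable.tsum_eq_zero_add (.of_norm_bounded hsummable (hbound · x hx))]
    simp only [Nat.add_sub_cancel, succ_mul_pow_div_Gamma hα, tsum_div_const, mittagLeffler,
      CharP.cast_eq_zero, zero_mul, zero_div, zero_add]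
  rw [← hvalue]
  exact hasDerivAt_tsum_of_isPreconnected hsummable isOpen_Ioo isPreconnected_Ioo
    (fun k y _ => hterm k y) hbound hx (summable_pow_div_Gamma hα 1 x) hx

theorem hasDerivAt_mittagLeffler_one_general (α lam t : ℝ) (hα : 0 < α) (ht : 0 < t) :
    HasDerivAt (fun s : ℝ => mittagLeffler α 1 (-lam * s ^ α))
      (-lam * t ^ (α - 1) * mittagLeffler α α (-lam * t ^ α)) t := by
  have hinner : HasDerivAt (fun s : ℝ => -lam * s ^ α) (-lam * (α * t ^ (α - 1))) t :=
    (hasDerivAt_rpow_const (Or.inl ht.ne')).const_mul _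
  refine ((hasDerivAt_mittagLeffler hα _).comp t hinner).congr_deriv ?_
  field_simp

/-- For `α, λ > 0` and `t > 0`:
`d/dt E_α(-λ t^α) = -λ t^{α-1} E_{α,α}(-λ t^α)`. -/
theorem hasDerivAt_mittagLeffler_one (α lam t : ℝ) (hα : 0 < α) (hlam : 0 < lam)
    (ht : 0 < t) :
    HasDerivAt (fun s : ℝ => mittagLeffler α 1 (-lam * s ^ α))
      (-lam * t ^ (α - 1) * mittagLeffler α α (-lam * t ^ α)) t :=
  hasDerivAt_mittagLeffler_one_general α lam t hα ht
end

section
/- Let H be a separable Hilbert space, T > 0 and 0 < β ≤ 1. The Riemann–Liouville operator I^β is injective on L²((0,T);H): if u ∈ L²((0,T);H) and I^β(u)(t) = 0 for almost every t ∈ (0,T), then u = 0 almost everywhere on (0,T). -/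
/-!
Applying `I^{1-β}` to `I^β u = 0` gives `∫_0^t u = 0`. Indeed, Fubini on the triangle
`0 < τ < s < t` and the Beta integral
`∫_τ^t (s-τ)^{a-1} (t-s)^{b-1} ds = B(a,b) (t-τ)^{a+b-1}`
give the semigroup law `I^b I^a = I^{a+b}`, pointwise as long as `a + b ≥ 1` keeps the composed
kernel bounded, and `I^1` is the primitive. The primitive is continuous, so it vanishes on all of
`(0,T)`, and by Lebesgue's differentiation theorem so does its a.e. derivative `u`.
-/

open MeasureTheory Set

noncomputable def riemannLiouville {H : Type*} [NormedAddCommGroup H]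
    [InnerProductSpace ℝ H] (β : ℝ) (f : ℝ → H) (t : ℝ) : H :=
  (1 / Real.Gamma β) • ∫ τ in (0 : ℝ)..t, (t - τ) ^ (β - 1) • f τ

theorem integral_rpow_mul_sub_rpow {a b c : ℝ} (ha : 0 < a) (hb : 0 < b) (hc : 0 < c) :
    ∫ x in (0 : ℝ)..c, x ^ (a - 1) * (c - x) ^ (b - 1) =
      c ^ (a + b - 1) * ProbabilityTheory.beta a b := by
  apply Complex.ofReal_injective
  have hcpow : ∀ x ∈ uIcc 0 c, ((x ^ (a - 1) * (c - x) ^ (b - 1) : ℝ) : ℂ) =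
      (x : ℂ) ^ ((a : ℂ) - 1) * ((c : ℂ) - x) ^ ((b : ℂ) - 1) := by
    intro x hx
    rw [uIcc_of_le hc.le] at hx
    push_cast [Complex.ofReal_cpow hx.1, Complex.ofReal_cpow (sub_nonneg.2 hx.2)]
    rfl
  rw [← intervalIntegral.integral_ofReal, intervalIntegral.integral_congr hcpow,
    Complex.betaIntegral_scaled _ _ hc,
    Complex.betaIntegral_eq_Gamma_mul_div _ _ (by simpa) (by simpa)]
  push_cast [Complex.ofReal_cpow hc.le, ProbabilityTheory.beta, ← Complex.Gamma_ofReal]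
  rfl

theorem integral_sub_rpow_mul_sub_rpow {a b τ t : ℝ} (ha : 0 < a) (hb : 0 < b) (hτt : τ < t) :
    ∫ s in τ..t, (s - τ) ^ (a - 1) * (t - s) ^ (b - 1) =
      (t - τ) ^ (a + b - 1) * ProbabilityTheory.beta a b := by
  rw [← integral_rpow_mul_sub_rpow ha hb (sub_pos.2 hτt), ← sub_self τ,
    ← intervalIntegral.integral_comp_sub_right]
  simp only [sub_sub_sub_cancel_right]

theorem intervalIntegrable_sub_rpow_mul_sub_rpow {a b τ t : ℝ} (ha : 0 < a) (hb : 0 < b)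
    (hτt : τ < t) :
    IntervalIntegrable (fun s => (s - τ) ^ (a - 1) * (t - s) ^ (b - 1)) volume τ t := by
  refine intervalIntegral.intervalIntegrable_of_integral_ne_zero ?_
  rw [integral_sub_rpow_mul_sub_rpow ha hb hτt]
  exact (mul_pos (Real.rpow_pos_of_pos (sub_pos.2 hτt) _)
    (ProbabilityTheory.beta_pos ha hb)).ne'

theorem MeasureTheory.Measure.restrict_Ioc_restrict_Ioi (μ : Measure ℝ) {a b c : ℝ} (hac : a ≤ c) :
    (μ.restrict (Ioc a b)).restrict (Ioi c) = μ.restrict (Ioc c b) := by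
  rw [Measure.restrict_restrict measurableSet_Ioi, inter_comm, Ioc_inter_Ioi, max_eq_right hac]

theorem ae_restrict_Ioc_mem_Ioo (μ : Measure ℝ) [NullSingletonClass μ] (a b : ℝ) :
    ∀ᵐ x ∂μ.restrict (Ioc a b), x ∈ Ioo a b := by
  rw [← Measure.restrict_congr_set Ioo_ae_eq_Ioc]
  exact ae_restrict_mem measurableSet_Ioo

section Composition

variable {E : Type*} [NormedAddCommGroup E] [NormedSpace ℝ E]

/-- Integrand of `∫_0^t (t-s)^(b-1) ∫_0^s (s-τ)^(a-1) v(τ) dτ ds` as a function of `(s, τ)`. -/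
noncomputable def riemannLiouvilleCompKernel (a b t : ℝ) (v : ℝ → E) : ℝ × ℝ → E :=
  {p | p.2 < p.1}.indicator fun p => (t - p.1) ^ (b - 1) • (p.1 - p.2) ^ (a - 1) • v p.2

variable {a b t : ℝ} {v : ℝ → E}

theorem norm_riemannLiouvilleCompKernel {s τ : ℝ} (hs : s ≤ t) :
    ‖riemannLiouvilleCompKernel a b t v (s, τ)‖ =
      riemannLiouvilleCompKernel a b t (fun τ => ‖v τ‖) (s, τ) := by
  by_cases hτs : τ < s
  · simp only [riemannLiouvilleCompKernel,
      indicator_of_mem (show (s, τ) ∈ {p : ℝ × ℝ | p.2 < p.1} from hτs), norm_smul,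
      smul_eq_mul, Real.norm_eq_abs, abs_of_nonneg (Real.rpow_nonneg (sub_nonneg.2 hs) _),
      abs_of_nonneg (Real.rpow_nonneg (sub_nonneg.2 hτs.le) _)]
  · simp [riemannLiouvilleCompKernel, hτs]

theorem integral_riemannLiouvilleCompKernel_fst {s : ℝ} (hs : s ∈ Ioc 0 t) :
    ∫ τ in Ioc 0 t, riemannLiouvilleCompKernel a b t v (s, τ) =
      (t - s) ^ (b - 1) • ∫ τ in 0..s, (s - τ) ^ (a - 1) • v τ := by
  have hsection : (fun τ => riemannLiouvilleCompKernel a b t v (s, τ)) =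
      (Iio s).indicator fun τ => (t - s) ^ (b - 1) • (s - τ) ^ (a - 1) • v τ := rfl
  have hset : Iio s ∩ Ioc 0 t = Ioo 0 s := by
    ext τ; simp only [mem_inter_iff, mem_Iio, mem_Ioc, mem_Ioo]
    constructor
    · rintro ⟨h1, h2, -⟩; exact ⟨h2, h1⟩
    · rintro ⟨h1, h2⟩; exact ⟨h2, h1, h2.le.trans hs.2⟩
  rw [hsection, integral_indicator measurableSet_Iio, Measure.restrict_restrict measurableSet_Iio,
    hset, ← integral_Ioc_eq_integral_Ioo, integral_smul, intervalIntegral.integral_of_le hs.1.le]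

theorem riemannLiouvilleCompKernel_snd_section (τ : ℝ) :
    (fun s => riemannLiouvilleCompKernel a b t v (s, τ)) =
      (Ioi τ).indicator fun s => ((s - τ) ^ (a - 1) * (t - s) ^ (b - 1)) • v τ := by
  ext s
  by_cases hτs : τ < s <;> simp [riemannLiouvilleCompKernel, hτs, smul_smul, mul_comm]

theorem integral_riemannLiouvilleCompKernel_snd [CompleteSpace E] (ha : 0 < a) (hb : 0 < b)
    {τ : ℝ} (hτ : τ ∈ Ioo 0 t) :
    ∫ s in Ioc 0 t, riemannLiouvilleCompKernel a b t v (s, τ) =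
      ((t - τ) ^ (a + b - 1) * ProbabilityTheory.beta a b) • v τ := by
  rw [riemannLiouvilleCompKernel_snd_section, integral_indicator measurableSet_Ioi,
    Measure.restrict_Ioc_restrict_Ioi volume hτ.1.le, integral_smul_const,
    ← intervalIntegral.integral_of_le hτ.2.le, integral_sub_rpow_mul_sub_rpow ha hb hτ.2]

theorem integrable_riemannLiouvilleCompKernel (ha : 0 < a) (hb : 0 < b) (hab : 1 ≤ a + b)
    (hv : IntegrableOn v (Ioc 0 t)) :
    Integrable (riemannLiouvilleCompKernel a b t v)
      ((volume.restrict (Ioc 0 t)).prod (volume.restrict (Ioc 0 t))) := by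
  have hmeas : AEStronglyMeasurable (riemannLiouvilleCompKernel a b t v)
      ((volume.restrict (Ioc 0 t)).prod (volume.restrict (Ioc 0 t))) := by
    have hv₂ := hv.aestronglyMeasurable.comp_snd (μ := volume.restrict (Ioc 0 t))
    have hk₁ : Measurable fun p : ℝ × ℝ => (t - p.1) ^ (b - 1) := by fun_prop
    have hk₂ : Measurable fun p : ℝ × ℝ => (p.1 - p.2) ^ (a - 1) := by fun_prop
    exact (hk₁.aestronglyMeasurable.smul (hk₂.aestronglyMeasurable.smul hv₂)).indicator
      (measurableSet_lt measurable_snd measurable_fst)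
  rw [integrable_prod_iff' hmeas]
  constructor
  · filter_upwards [ae_restrict_Ioc_mem_Ioo volume 0 t] with τ hτ
    rw [riemannLiouvilleCompKernel_snd_section, integrable_indicator_iff measurableSet_Ioi,
      IntegrableOn, Measure.restrict_Ioc_restrict_Ioi volume hτ.1.le]
    exact (intervalIntegrable_sub_rpow_mul_sub_rpow ha hb hτ.2).1.smul_const (v τ)
  · have hnorm : ∀ᵐ τ ∂volume.restrict (Ioc 0 t),
        ∫ s in Ioc 0 t, ‖riemannLiouvilleCompKernel a b t v (s, τ)‖ =
          ((t - τ) ^ (a + b - 1) * ProbabilityTheory.beta a b) * ‖v τ‖ := by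
      filter_upwards [ae_restrict_Ioc_mem_Ioo volume 0 t] with τ hτ
      have hsnd := integral_riemannLiouvilleCompKernel_snd (v := fun τ => ‖v τ‖) ha hb hτ
      rw [smul_eq_mul] at hsnd
      rw [← hsnd]
      refine setIntegral_congr_fun measurableSet_Ioc fun s hs => ?_
      exact norm_riemannLiouvilleCompKernel hs.2
    refine Integrable.congr ?_ (hnorm.mono fun τ h => h.symm)
    refine hv.norm.bdd_mul (c := t ^ (a + b - 1) * ProbabilityTheory.beta a b)
      (by fun_prop : Measurable fun τ : ℝ =>
        (t - τ) ^ (a + b - 1) * ProbabilityTheory.beta a b).aestronglyMeasurable ?_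
    filter_upwards [ae_restrict_Ioc_mem_Ioo volume 0 t] with τ hτ
    rw [Real.norm_of_nonneg (mul_nonneg (Real.rpow_nonneg (sub_nonneg.2 hτ.2.le) _)
      (ProbabilityTheory.beta_pos ha hb).le)]
    exact mul_le_mul_of_nonneg_right (Real.rpow_le_rpow (sub_nonneg.2 hτ.2.le)
      (by linarith [hτ.1]) (by linarith)) (ProbabilityTheory.beta_pos ha hb).le

theorem integral_sub_rpow_smul_integral_sub_rpow_smul [CompleteSpace E] (ha : 0 < a)
    (hb : 0 < b) (hab : 1 ≤ a + b) (ht : 0 ≤ t) (hv : IntegrableOn v (Ioc 0 t)) :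
    ∫ s in 0..t, (t - s) ^ (b - 1) • ∫ τ in 0..s, (s - τ) ^ (a - 1) • v τ =
      ProbabilityTheory.beta a b • ∫ τ in 0..t, (t - τ) ^ (a + b - 1) • v τ := by
  rw [intervalIntegral.integral_of_le ht, intervalIntegral.integral_of_le ht]
  calc ∫ s in Ioc 0 t, (t - s) ^ (b - 1) • ∫ τ in 0..s, (s - τ) ^ (a - 1) • v τ
      = ∫ s in Ioc 0 t, ∫ τ in Ioc 0 t, riemannLiouvilleCompKernel a b t v (s, τ) :=
        setIntegral_congr_fun measurableSet_Ioc fun s hs =>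
          (integral_riemannLiouvilleCompKernel_fst hs).symm
    _ = ∫ τ in Ioc 0 t, ∫ s in Ioc 0 t, riemannLiouvilleCompKernel a b t v (s, τ) :=
        integral_integral_swap (integrable_riemannLiouvilleCompKernel ha hb hab hv)
    _ = ∫ τ in Ioc 0 t, ((t - τ) ^ (a + b - 1) * ProbabilityTheory.beta a b) • v τ :=
        integral_congr_ae <| by
          filter_upwards [ae_restrict_Ioc_mem_Ioo volume 0 t] with τ hτ
          exact integral_riemannLiouvilleCompKernel_snd ha hb hτ
    _ = ProbabilityTheory.beta a b • ∫ τ in Ioc 0 t, (t - τ) ^ (a + b - 1) • v τ := by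
        simp_rw [mul_comm _ (ProbabilityTheory.beta a b), mul_smul]
        exact integral_smul _ _

end Composition

section RiemannLiouville

variable {H : Type*} [NormedAddCommGroup H] [InnerProductSpace ℝ H]

theorem riemannLiouville_riemannLiouville [CompleteSpace H] {a b t : ℝ} {v : ℝ → H}
    (ha : 0 < a) (hb : 0 < b) (hab : 1 ≤ a + b) (ht : 0 ≤ t) (hv : IntegrableOn v (Ioc 0 t)) :
    riemannLiouville b (riemannLiouville a v) t = riemannLiouville (a + b) v t := by
  simp only [riemannLiouville]
  simp_rw [smul_comm _ (1 / Real.Gamma a)]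
  rw [intervalIntegral.integral_smul,
    integral_sub_rpow_smul_integral_sub_rpow_smul ha hb hab ht hv, smul_smul, smul_smul,
    ProbabilityTheory.beta]
  have hΓa := (Real.Gamma_pos_of_pos ha).ne'
  have hΓb := (Real.Gamma_pos_of_pos hb).ne'
  have hΓab := (Real.Gamma_pos_of_pos (add_pos ha hb)).ne'
  congr 1
  field_simp

theorem riemannLiouville_one (f : ℝ → H) (t : ℝ) :
    riemannLiouville 1 f t = ∫ τ in 0..t, f τ := by
  simp [riemannLiouville]

theorem riemannLiouville_eq_zero_of_ae {β t : ℝ} {f : ℝ → H}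
    (hf : ∀ᵐ s ∂volume.restrict (uIoc 0 t), f s = 0) : riemannLiouville β f t = 0 := by
  rw [riemannLiouville, intervalIntegral.integral_congr_ae (g := fun _ => 0),
    intervalIntegral.integral_zero, smul_zero]
  filter_upwards [(ae_restrict_iff' measurableSet_uIoc).1 hf] with s hs hs_mem
  simp [hs hs_mem]

end RiemannLiouville

theorem ae_eq_zero_of_ae_intervalIntegral_eq_zero {E : Type*} [NormedAddCommGroup E]
    [NormedSpace ℝ E] [CompleteSpace E] {T : ℝ} {f : ℝ → E}
    (hf : IntervalIntegrable f volume 0 T)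
    (h : ∀ᵐ t ∂volume.restrict (Ioo 0 T), ∫ τ in 0..t, f τ = 0) :
    ∀ᵐ t ∂volume.restrict (Ioo 0 T), f t = 0 := by
  have hprimitive : EqOn (fun t => ∫ τ in 0..t, f τ) 0 (Ioo 0 T) :=
    Measure.eqOn_Ioo_of_ae_eq volume h
      ((intervalIntegral.continuousOn_primitive_interval' hf left_mem_uIcc).mono
      (Ioo_subset_Icc_self.trans Icc_subset_uIcc)) continuousOn_const
  rw [ae_restrict_iff' measurableSet_Ioo]
  filter_upwards [hf.ae_hasDerivAt_integral] with x hderiv hx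
  have hconst : (fun t => ∫ τ in 0..t, f τ) =ᶠ[nhds x] fun _ => 0 :=
    Filter.eventually_of_mem (isOpen_Ioo.mem_nhds hx) hprimitive
  exact (hderiv (Icc_subset_uIcc (Ioo_subset_Icc_self hx)) 0 left_mem_uIcc).unique
    ((hasDerivAt_const x 0).congr_of_eventuallyEq hconst)

theorem riemannLiouville_injective_general {H : Type*} [NormedAddCommGroup H]
    [InnerProductSpace ℝ H] [CompleteSpace H]
    (T β : ℝ) (hT : 0 < T) (hβ₀ : 0 < β) (hβ₁ : β ≤ 1) (u : ℝ → H)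
    (hu : MemLp u 2 (volume.restrict (Set.Ioo 0 T)))
    (h0 : ∀ᵐ t ∂(volume.restrict (Set.Ioo 0 T)), riemannLiouville β u t = 0) :
    ∀ᵐ t ∂(volume.restrict (Set.Ioo 0 T)), u t = 0 := by
  have hu₁ : IntegrableOn u (Ioo 0 T) := hu.integrable one_le_two
  refine ae_eq_zero_of_ae_intervalIntegral_eq_zero
    ((intervalIntegrable_iff_integrableOn_Ioo_of_le hT.le).2 hu₁) ?_
  rcases hβ₁.lt_or_eq with hβ | rfl
  · filter_upwards [ae_restrict_mem measurableSet_Ioo] with t ht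
    have hsemigroup := riemannLiouville_riemannLiouville hβ₀ (sub_pos.2 hβ) (by linarith)
      ht.1.le (hu₁.mono_set (Ioc_subset_Ioo_right ht.2))
    rw [add_sub_cancel, riemannLiouville_one] at hsemigroup
    rw [← hsemigroup]
    refine riemannLiouville_eq_zero_of_ae (ae_restrict_of_ae_restrict_of_subset ?_ h0)
    rw [uIoc_of_le ht.1.le]
    exact Ioc_subset_Ioo_right ht.2
  · simpa only [riemannLiouville_one] using h0

/-- For a separable Hilbert space `H`, `T > 0` and `0 < β ≤ 1`, the Riemann–Liouville
operator `I^β` is injective on `L²((0,T);H)`: if `I^β(u) = 0` a.e. on `(0,T)`, then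
`u = 0` a.e. on `(0,T)`. -/
theorem riemannLiouville_injective {H : Type*} [NormedAddCommGroup H]
    [InnerProductSpace ℝ H] [CompleteSpace H] [TopologicalSpace.SeparableSpace H]
    (T β : ℝ) (hT : 0 < T) (hβ₀ : 0 < β) (hβ₁ : β ≤ 1) (u : ℝ → H)
    (hu : MemLp u 2 (volume.restrict (Set.Ioo 0 T)))
    (h0 : ∀ᵐ t ∂(volume.restrict (Set.Ioo 0 T)), riemannLiouville β u t = 0) :
    ∀ᵐ t ∂(volume.restrict (Set.Ioo 0 T)), u t = 0 :=
  riemannLiouville_injective_general T β hT hβ₀ hβ₁ u hu h0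
end
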